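/- Assume ζ = 0. Let B = (x^{β₁},…,x^{β_μ}) be a monomial basis of R/Q₀, and let {x^{γ₁},…,x^{γ_{s−μ}}} be the remaining monomials x^γ ∉ Q₀ with γ ∈ supp 𝒟₀ and x^γ ∉ B, where s = #supp 𝒟₀. For each j write the normal form x^{γ_j} ≡ Σ_{i=1}^{μ} λ_{ij} x^{β_i} mod Q₀. Then the elements Λ_i = d^{β_i} + Σ_{j=1}^{s−μ} λ_{ij} d^{γ_j}, i = 1,…,μ, form a basis of 𝒟₀, and the normal form of any g ∈ R modulo Q₀ with respect to the basis B is NF(g) = Σ_{i=1}^{μ} Λ_i^0[g] · x^{β_i}. -/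

import Mathlib

open MvPolynomial

/-- Total degree of a multi-exponent. -/
def multideg {n : ℕ} (α : Fin n →₀ ℕ) : ℕ := α.sum fun _ k => k

/-- Normalized derivative `d^α g = (1/α!) ∂^α g` as a polynomial. -/
noncomputable def nderiv {n : ℕ} (α : Fin n →₀ ℕ) (g : MvPolynomial (Fin n) ℝ) :
    MvPolynomial (Fin n) ℝ :=
  ∑ γ ∈ g.support,
    monomial (γ - α) (((∏ i, (γ i).choose (α i) : ℕ) : ℝ) * coeff γ g)

/-- `Λ(∂_x)[g]`: apply the differential operator with coefficients `Λ`
(in the normalized basis `d^α`), keeping a polynomial result. -/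
noncomputable def applyPoly {n : ℕ} (Λ : (Fin n →₀ ℕ) →₀ ℝ)
    (g : MvPolynomial (Fin n) ℝ) : MvPolynomial (Fin n) ℝ :=
  Λ.sum fun α c => c • nderiv α g

/-- `Λ ↦ Λ^ζ[g]`, as a linear map in `Λ`. -/
noncomputable def applyAtL {n : ℕ} (ζ : Fin n → ℝ) (g : MvPolynomial (Fin n) ℝ) :
    ((Fin n →₀ ℕ) →₀ ℝ) →ₗ[ℝ] ℝ :=
  Finsupp.linearCombination ℝ (fun α => eval ζ (nderiv α g))

/-- `Λ^ζ[g]`. -/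
noncomputable def applyAt {n : ℕ} (ζ : Fin n → ℝ) (Λ : (Fin n →₀ ℕ) →₀ ℝ)
    (g : MvPolynomial (Fin n) ℝ) : ℝ := applyAtL ζ g Λ

/-- The orthogonal (dual space) of an ideal at ζ. -/
noncomputable def dualSpace {n : ℕ} (ζ : Fin n → ℝ)
    (Q : Ideal (MvPolynomial (Fin n) ℝ)) : Submodule ℝ ((Fin n →₀ ℕ) →₀ ℝ) :=
  ⨅ p ∈ Q, LinearMap.ker (applyAtL ζ p)

/-- The maximal ideal at ζ. -/
noncomputable def maxIdealAt {n : ℕ} (ζ : Fin n → ℝ) : Ideal (MvPolynomial (Fin n) ℝ) :=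
  Ideal.span (Set.range fun i => X i - C (ζ i))

/-- `Q` is the primary component of `I` at an isolated root `ζ`. -/
def IsPrimaryComponentAt {n : ℕ} (ζ : Fin n → ℝ)
    (I Q : Ideal (MvPolynomial (Fin n) ℝ)) : Prop :=
  Q.IsPrimary ∧ Q.radical = maxIdealAt ζ ∧
    ∃ S : Finset (Ideal (MvPolynomial (Fin n) ℝ)),
      (∀ P ∈ S, P.IsPrimary ∧ ¬ P.radical ≤ maxIdealAt ζ) ∧ I = S.inf id ⊓ Q

/-- Elements of the dual space of degree at most `t`. -/
noncomputable def dualSpaceLE {n : ℕ} (ζ : Fin n → ℝ)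
    (Q : Ideal (MvPolynomial (Fin n) ℝ)) (t : ℕ) :
    Submodule ℝ ((Fin n →₀ ℕ) →₀ ℝ) :=
  dualSpace ζ Q ⊓ Finsupp.supported ℝ ℝ {α | multideg α ≤ t}

/-- The derivation `∂/∂∂_i` in the normalized coordinates: shift of coefficients. -/
noncomputable def dshift {n : ℕ} (i : Fin n) (Λ : (Fin n →₀ ℕ) →₀ ℝ) :
    (Fin n →₀ ℕ) →₀ ℝ :=
  Finsupp.comapDomain (fun β => β + Finsupp.single i 1) Λ
    (fun _ _ _ _ h => add_right_cancel h)

/-- Truncation: set `∂_j = 0` for `j > k`. -/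
noncomputable def trunck {n : ℕ} (k : Fin n) (Λ : (Fin n →₀ ℕ) →₀ ℝ) :
    (Fin n →₀ ℕ) →₀ ℝ :=
  Λ.filter (fun α => ∀ j, k < j → α j = 0)

/-- Integration with respect to `∂_k` in the normalized coordinates. -/
noncomputable def intk {n : ℕ} (k : Fin n) (Λ : (Fin n →₀ ℕ) →₀ ℝ) :
    (Fin n →₀ ℕ) →₀ ℝ :=
  Finsupp.mapDomain (fun α => α + Finsupp.single k 1) Λ

/-- `supp 𝒟₀`: the set of exponents `α` such that `d^α` appears with a nonzero
coefficient in some element of the dual space at `0`. -/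
def dsupp {n : ℕ} (Q : Ideal (MvPolynomial (Fin n) ℝ)) : Set (Fin n →₀ ℕ) :=
  {α | ∃ Λ ∈ dualSpace (0 : Fin n → ℝ) Q, Λ α ≠ 0}

/-! At the origin `Λ⁰[g] = ∑_α Λ_α · coeff_α g`, so `𝒟₀` consists of the finitely supported
functionals on `R` that vanish on `Q₀`. As `Q₀` contains every monomial of large degree, every
linear functional on `R/Q₀` is of this form; in particular the coordinate functionals of the
basis `B` come from elements of `𝒟₀`. These are supported on `supp 𝒟₀`, and their values at
`β_k` and `γ_j` are read off from `B` and the normal forms of the `x^{γ_j}`: they are the `Λ_i`.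
So `(Λ_i)` is the basis of `𝒟₀` dual to `B`, and `NF(g)` is the expansion of `g` in `B`. -/

theorem mem_dualSpace_iff {n : ℕ} {ζ : Fin n → ℝ} {Q : Ideal (MvPolynomial (Fin n) ℝ)}
    {Λ : (Fin n →₀ ℕ) →₀ ℝ} : Λ ∈ dualSpace ζ Q ↔ ∀ p ∈ Q, applyAt ζ Λ p = 0 := by
  simp [dualSpace, applyAt]

theorem eval_zero_nderiv {n : ℕ} (α : Fin n →₀ ℕ) (g : MvPolynomial (Fin n) ℝ) :
    eval 0 (nderiv α g) = coeff α g := by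
  classical
  rw [nderiv, map_sum, eval_zero]
  simp only [constantCoeff_monomial]
  rw [Finset.sum_eq_single α]
  · simp [Nat.choose_self]
  · intro γ _ hγα
    split_ifs with hle
    · rw [tsub_eq_zero_iff_le] at hle
      obtain ⟨i, hi⟩ : ∃ i, γ i < α i := by
        by_contra! h
        exact hγα (le_antisymm hle (Finsupp.le_def.mpr h))
      have hchoose : ∏ j, (γ j).choose (α j) = 0 :=
        Finset.prod_eq_zero (Finset.mem_univ i) (Nat.choose_eq_zero_of_lt hi)
      simp [hchoose]
    · rfl
  · simp_all

noncomputable def applyAtZeroₗ {n : ℕ} (Λ : (Fin n →₀ ℕ) →₀ ℝ) :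
    MvPolynomial (Fin n) ℝ →ₗ[ℝ] ℝ :=
  Λ.sum fun α c => c • lcoeff ℝ α

theorem applyAtZeroₗ_apply {n : ℕ} (Λ : (Fin n →₀ ℕ) →₀ ℝ) (g : MvPolynomial (Fin n) ℝ) :
    applyAtZeroₗ Λ g = applyAt 0 Λ g := by
  rw [applyAt, applyAtL, Finsupp.linearCombination_apply, applyAtZeroₗ,
    LinearMap.finsupp_sum_apply]
  simp only [eval_zero_nderiv, LinearMap.smul_apply, lcoeff_apply]

theorem applyAt_zero_monomial {n : ℕ} (Λ : (Fin n →₀ ℕ) →₀ ℝ) (α : Fin n →₀ ℕ) (c : ℝ) :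
    applyAt 0 Λ (monomial α c) = Λ α * c := by
  classical
  rw [← applyAtZeroₗ_apply, applyAtZeroₗ, LinearMap.finsupp_sum_apply]
  simp only [LinearMap.smul_apply, lcoeff_apply, coeff_monomial, smul_eq_mul, mul_ite, mul_zero,
    Finsupp.sum_ite_eq, Finsupp.mem_support_iff, ne_eq, ite_not]
  split_ifs with h <;> simp [h]

theorem applyAtZeroₗ_eq {n : ℕ} {Λ : (Fin n →₀ ℕ) →₀ ℝ} {φ : MvPolynomial (Fin n) ℝ →ₗ[ℝ] ℝ}
    (h : ∀ α, Λ α = φ (monomial α 1)) : applyAtZeroₗ Λ = φ := by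
  refine linearMap_ext fun α => LinearMap.ext_ring ?_
  rw [LinearMap.comp_apply, LinearMap.comp_apply, applyAtZeroₗ_apply, applyAt_zero_monomial,
    mul_one, h]

theorem finite_setOf_monomial_notMem {n : ℕ} {Q : Ideal (MvPolynomial (Fin n) ℝ)}
    (hQ : maxIdealAt 0 ≤ Q.radical) : {α : Fin n →₀ ℕ | monomial α (1 : ℝ) ∉ Q}.Finite := by
  choose k hk using fun i => hQ (Ideal.subset_span ⟨i, by simp⟩ : X i - C 0 ∈ maxIdealAt 0)
  refine (Set.finite_Iic (Finsupp.equivFunOnFinite.symm k)).subset fun α hα => ?_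
  refine Finsupp.le_def.mpr fun i => ?_
  by_contra! hi
  refine hα ?_
  have hle : Finsupp.single i (k i) ≤ α := by simpa using hi.le
  rw [← add_tsub_cancel_of_le hle, ← one_mul (1 : ℝ), ← monomial_mul, ← X_pow_eq_monomial]
  exact Q.mul_mem_right _ (by simpa using hk i)

theorem apply_eq_of_applyAt_zero_eq {n : ℕ} {D : (Fin n →₀ ℕ) →₀ ℝ}
    {F : MvPolynomial (Fin n) ℝ → ℝ} (h : ∀ g, applyAt 0 D g = F g) (α : Fin n →₀ ℕ) :
    D α = F (monomial α 1) := by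
  rw [← h, applyAt_zero_monomial, mul_one]

theorem exists_mem_dualSpace_applyAt_eq {n : ℕ} {Q : Ideal (MvPolynomial (Fin n) ℝ)}
    (hQ : maxIdealAt 0 ≤ Q.radical) (φ : MvPolynomial (Fin n) ℝ →ₗ[ℝ] ℝ)
    (hφ : ∀ p ∈ Q, φ p = 0) : ∃ D ∈ dualSpace 0 Q, ∀ g, applyAt 0 D g = φ g := by
  have hfin : (Function.support fun α => φ (monomial α 1)).Finite :=
    (finite_setOf_monomial_notMem hQ).subset fun α hα hmem => hα (hφ _ hmem)
  have hD := applyAtZeroₗ_eq (Λ := Finsupp.ofSupportFinite _ hfin) fun α => rfl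
  have hDφ : ∀ g, applyAt 0 _ g = φ g := fun g => by rw [← applyAtZeroₗ_apply, hD]
  exact ⟨_, mem_dualSpace_iff.mpr fun p hp => (hDφ p).trans (hφ p hp), hDφ⟩

theorem Ideal.Quotient.sub_sum_repr_smul_mem {K R ι : Type*} [CommRing K] [CommRing R]
    [Algebra K R] [Fintype ι] {Q : Ideal R} (b : Module.Basis ι K (R ⧸ Q)) {v : ι → R}
    (hb : ∀ i, b i = Ideal.Quotient.mk Q (v i)) (g : R) :
    g - ∑ i, b.repr (Ideal.Quotient.mk Q g) i • v i ∈ Q := by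
  refine Ideal.Quotient.eq.mp ?_
  conv_lhs => rw [← b.sum_repr (Ideal.Quotient.mk Q g)]
  simp only [hb, ← Ideal.Quotient.mkₐ_eq_mk K, map_sum, map_smul]

theorem Ideal.Quotient.repr_mk_eq_of_sub_mem {K R ι : Type*} [CommRing K] [CommRing R]
    [Algebra K R] [Fintype ι] {Q : Ideal R} (b : Module.Basis ι K (R ⧸ Q)) {v : ι → R}
    (hb : ∀ i, b i = Ideal.Quotient.mk Q (v i)) {p : R} {c : ι → K}
    (h : p - ∑ i, c i • v i ∈ Q) : ⇑(b.repr (Ideal.Quotient.mk Q p)) = c := by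
  have hmk : Ideal.Quotient.mk Q (∑ i, c i • v i) = ∑ i, c i • b i := by
    rw [← Ideal.Quotient.mkₐ_eq_mk K, map_sum]
    simp only [map_smul, Ideal.Quotient.mkₐ_eq_mk, hb]
  rw [Ideal.Quotient.eq.mpr h, hmk, b.repr_sum_self]

section DualBasis

variable {n : ℕ} {ι : Type*} {Q : Ideal (MvPolynomial (Fin n) ℝ)}
  {β : ι → Fin n →₀ ℕ} (b : Module.Basis ι ℝ (MvPolynomial (Fin n) ℝ ⧸ Q))

theorem applyAt_zero_eq_sum_repr_mul [Fintype ι]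
    (hb : ∀ i, b i = Ideal.Quotient.mk Q (monomial (β i) 1))
    {D : (Fin n →₀ ℕ) →₀ ℝ} (hD : D ∈ dualSpace 0 Q) (g : MvPolynomial (Fin n) ℝ) :
    applyAt 0 D g = ∑ i, b.repr (Ideal.Quotient.mk Q g) i * D (β i) := by
  have h := mem_dualSpace_iff.mp hD _ (Ideal.Quotient.sub_sum_repr_smul_mem b hb g)
  rw [← applyAtZeroₗ_apply, map_sub, map_sum, sub_eq_zero] at h
  rw [← applyAtZeroₗ_apply, h]
  simp only [map_smul, applyAtZeroₗ_apply, applyAt_zero_monomial, mul_one, smul_eq_mul]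

theorem eq_single_add_sum_of_applyAt_eq_repr [Fintype ι]
    (hb : ∀ i, b i = Ideal.Quotient.mk Q (monomial (β i) 1)) {κ : Type*} [Fintype κ]
    {γ : κ → Fin n →₀ ℕ} (hinj : Function.Injective (Sum.elim β γ))
    (hsupp : Set.range (Sum.elim β γ) = dsupp Q) {lam : ι → κ → ℝ}
    (hnf : ∀ j, monomial (γ j) 1 - ∑ i, lam i j • monomial (β i) 1 ∈ Q) {i : ι}
    {D : (Fin n →₀ ℕ) →₀ ℝ} (hD : D ∈ dualSpace 0 Q)
    (hDb : ∀ g, applyAt 0 D g = b.repr (Ideal.Quotient.mk Q g) i) :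
    D = Finsupp.single (β i) 1 + ∑ j, lam i j • Finsupp.single (γ j) 1 := by
  classical
  have hsub : ↑D.support ⊆ Set.range (Sum.elim β γ) := fun α hα =>
    hsupp ▸ ⟨D, hD, Finsupp.mem_support_iff.mp hα⟩
  rw [← Finsupp.mapDomain_comapDomain _ hinj D hsub, Finsupp.mapDomain,
    Finsupp.sum_fintype _ _ fun _ => Finsupp.single_zero _, Fintype.sum_sum_type]
  simp only [Finsupp.comapDomain_apply, Sum.elim_inl, Sum.elim_inr,
    apply_eq_of_applyAt_zero_eq hDb, ← hb, b.repr_self,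
    Ideal.Quotient.repr_mk_eq_of_sub_mem b hb (hnf _), Finsupp.smul_single_one]
  congr 1
  refine (Finset.sum_eq_single i (fun k _ hk => ?_) (by simp)).trans (by simp)
  rw [Finsupp.single_eq_of_ne hk.symm, Finsupp.single_zero]

theorem applyAt_zero_single_add_sum_eq_repr [Fintype ι]
    (hb : ∀ i, b i = Ideal.Quotient.mk Q (monomial (β i) 1)) (hQ : maxIdealAt 0 ≤ Q.radical)
    {κ : Type*} [Fintype κ] {γ : κ → Fin n →₀ ℕ} (hinj : Function.Injective (Sum.elim β γ))
    (hsupp : Set.range (Sum.elim β γ) = dsupp Q) {lam : ι → κ → ℝ}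
    (hnf : ∀ j, monomial (γ j) 1 - ∑ i, lam i j • monomial (β i) 1 ∈ Q) (i : ι)
    (g : MvPolynomial (Fin n) ℝ) :
    applyAt 0 (Finsupp.single (β i) 1 + ∑ j, lam i j • Finsupp.single (γ j) 1) g
      = b.repr (Ideal.Quotient.mk Q g) i := by
  obtain ⟨D, hD, hDb⟩ := exists_mem_dualSpace_applyAt_eq hQ
    ((b.coord i).comp (Ideal.Quotient.mkₐ ℝ Q).toLinearMap) fun p hp => by
      simp [Ideal.Quotient.eq_zero_iff_mem.mpr hp]
  rw [← eq_single_add_sum_of_applyAt_eq_repr b hb hinj hsupp hnf hD hDb]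
  exact hDb g

variable {Λ : ι → (Fin n →₀ ℕ) →₀ ℝ}

theorem mem_dualSpace_of_applyAt_eq_repr
    (hΛ : ∀ i g, applyAt 0 (Λ i) g = b.repr (Ideal.Quotient.mk Q g) i) (i : ι) :
    Λ i ∈ dualSpace 0 Q :=
  mem_dualSpace_iff.mpr fun p hp => by
    rw [hΛ, Ideal.Quotient.eq_zero_iff_mem.mpr hp, map_zero, Finsupp.zero_apply]

theorem linearIndependent_of_applyAt_eq_repr [Fintype ι]
    (hb : ∀ i, b i = Ideal.Quotient.mk Q (monomial (β i) 1))
    (hΛ : ∀ i g, applyAt 0 (Λ i) g = b.repr (Ideal.Quotient.mk Q g) i) :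
    LinearIndependent ℝ Λ := by
  classical
  refine Fintype.linearIndependent_iff.mpr fun c hc k => ?_
  have hk := congrArg (· (β k)) hc
  simpa [apply_eq_of_applyAt_zero_eq (hΛ _), ← hb, Finsupp.single_apply] using hk

theorem span_range_eq_dualSpace_of_applyAt_eq_repr [Fintype ι]
    (hb : ∀ i, b i = Ideal.Quotient.mk Q (monomial (β i) 1))
    (hΛ : ∀ i g, applyAt 0 (Λ i) g = b.repr (Ideal.Quotient.mk Q g) i) :
    Submodule.span ℝ (Set.range Λ) = dualSpace 0 Q := by
  refine le_antisymm (Submodule.span_le.mpr <| Set.range_subset_iff.mpr <|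
    mem_dualSpace_of_applyAt_eq_repr b hΛ) fun D hD => ?_
  have hDΛ : D = ∑ i, D (β i) • Λ i := by
    ext α
    have hα := apply_eq_of_applyAt_zero_eq (applyAt_zero_eq_sum_repr_mul b hb hD) α
    simp only [hα, Finsupp.finsetSum_apply, Finsupp.smul_apply, smul_eq_mul,
      apply_eq_of_applyAt_zero_eq (hΛ _), mul_comm]
  rw [hDΛ]
  exact Submodule.sum_mem _ fun i _ => Submodule.smul_mem _ _ (Submodule.subset_span ⟨i, rfl⟩)

end DualBasis

/-- given a monomial basis `B = (x^{β₁},…,x^{β_μ})` of `R/Q₀`, the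
remaining exponents `γ₁,…,γ_{s−μ}` of `supp 𝒟₀`, and the normal forms
`x^{γ_j} ≡ Σ_i λ_{ij} x^{β_i} mod Q₀`, the elements
`Λ_i = d^{β_i} + Σ_j λ_{ij} d^{γ_j}` form a basis of `𝒟₀`, and the normal form
of any `g` is `NF(g) = Σ_i Λ_i^0[g]·x^{β_i}`. -/
theorem stmt4 {n s μ m : ℕ} (f : Fin s → MvPolynomial (Fin n) ℝ)
    (Q : Ideal (MvPolynomial (Fin n) ℝ))
    (hQ : IsPrimaryComponentAt (0 : Fin n → ℝ) (Ideal.span (Set.range f)) Q)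
    (β : Fin μ → (Fin n →₀ ℕ)) (γ : Fin m → (Fin n →₀ ℕ))
    (hinj : Function.Injective (Sum.elim β γ))
    (hsupp : Set.range (Sum.elim β γ) = dsupp Q)
    (hBli : LinearIndependent ℝ (fun i =>
      Ideal.Quotient.mk Q (MvPolynomial.monomial (β i) (1 : ℝ))))
    (hBsp : Submodule.span ℝ (Set.range fun i =>
      Ideal.Quotient.mk Q (MvPolynomial.monomial (β i) (1 : ℝ))) = ⊤)
    (lam : Fin μ → Fin m → ℝ)
    (hnf : ∀ j, (MvPolynomial.monomial (γ j) (1 : ℝ)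
      - ∑ i, lam i j • MvPolynomial.monomial (β i) (1 : ℝ)) ∈ Q)
    (Λ : Fin μ → ((Fin n →₀ ℕ) →₀ ℝ))
    (hΛ : ∀ i, Λ i = Finsupp.single (β i) (1 : ℝ)
      + ∑ j, lam i j • Finsupp.single (γ j) (1 : ℝ)) :
    (∀ i, Λ i ∈ dualSpace (0 : Fin n → ℝ) Q) ∧
    LinearIndependent ℝ Λ ∧
    Submodule.span ℝ (Set.range Λ) = dualSpace (0 : Fin n → ℝ) Q ∧
    (∀ g : MvPolynomial (Fin n) ℝ,
      (g - ∑ i, applyAt (0 : Fin n → ℝ) (Λ i) g •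
        MvPolynomial.monomial (β i) (1 : ℝ)) ∈ Q) := by
  obtain ⟨-, hrad, -⟩ := hQ
  let b := Module.Basis.mk hBli hBsp.ge
  have hb : ∀ i, b i = Ideal.Quotient.mk Q (monomial (β i) 1) :=
    Module.Basis.mk_apply hBli hBsp.ge
  have hΛb : ∀ i g, applyAt 0 (Λ i) g = b.repr (Ideal.Quotient.mk Q g) i := fun i g => by
    rw [hΛ i]
    exact applyAt_zero_single_add_sum_eq_repr b hb hrad.ge hinj hsupp hnf i g
  refine ⟨mem_dualSpace_of_applyAt_eq_repr b hΛb, linearIndependent_of_applyAt_eq_repr b hb hΛb,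
    span_range_eq_dualSpace_of_applyAt_eq_repr b hb hΛb, fun g => ?_⟩
  simpa only [hΛb] using Ideal.Quotient.sub_sum_repr_smul_mem b hb g
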